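/- The Jaccard distance on finite subsets of a type is a metric: it is nonnegative, zero exactly on equal sets, symmetric, and satisfies the triangle inequality. -/

import Mathlib

/-- The Jaccard distance between finite sets: `1 - |A ∩ B| / |A ∪ B|`,
with the convention that it is `0` when both sets are empty. -/
noncomputable def jaccardDist {α : Type*} [DecidableEq α] (A B : Finset α) : ℝ :=
  if A ∪ B = ∅ then 0 else 1 - ((A ∩ B).card : ℝ) / ((A ∪ B).card : ℝ)

/-!
Writing `d(A, B) = |A ∆ B| / |A ∪ B|`, the triangle inequality follows by passing to the common
denominator `|A ∪ B ∪ C|`. Adding the elements of `B` outside `A ∪ C` to both numerator and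
denominator of `d(A, C)` can only increase it, and the enlarged numerator is at most
`|A ∆ B| + |B ∆ C|`; enlarging the denominators of `d(A, B)` and `d(B, C)` can only decrease them.
-/

open Finset
open scoped symmDiff

theorem div_le_add_div_add {K : Type*} [Field K] [LinearOrder K] [IsStrictOrderedRing K]
    {a b k : K} (ha : 0 ≤ a) (hab : a ≤ b) (hk : 0 ≤ k) : a / b ≤ (a + k) / (b + k) := by
  rcases (ha.trans hab).eq_or_lt with rfl | hb
  · rcases hab.antisymm ha with rfl
    simp only [div_zero, zero_add]
    positivity
  · rw [div_le_div_iff₀ hb (by linarith)]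
    nlinarith

namespace Finset

theorem card_div_card_le_card_div_card {α : Type*} {s t u : Finset α} (hst : s ⊆ t)
    (htu : t ⊆ u) : (#s : ℝ) / #u ≤ #s / #t := by
  rcases s.eq_empty_or_nonempty with rfl | hs
  · simp
  · exact div_le_div_of_nonneg_left (by positivity)
      (by exact_mod_cast (hs.mono hst).card_pos) (by exact_mod_cast card_le_card htu)

variable {α : Type*} [DecidableEq α]

theorem card_symmDiff_add_card_inter (s t : Finset α) : #(s ∆ t) + #(s ∩ t) = #(s ∪ t) := by
  rw [symmDiff_eq_sup_sdiff_inf]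
  exact card_sdiff_add_card_eq_card inter_subset_union

theorem card_symmDiff_add_card_sdiff_union_le (A B C : Finset α) :
    #(A ∆ C) + #(B \ (A ∪ C)) ≤ #(A ∆ B) + #(B ∆ C) := by
  calc #(A ∆ C) + #(B \ (A ∪ C)) ≤ #(A ∆ B ∪ B ∆ C) + #(A ∆ B ∩ B ∆ C) := by
        gcongr
        · exact symmDiff_triangle A B C
        · intro x
          simp only [mem_sdiff, mem_union, mem_inter, mem_symmDiff]
          tauto
    _ = #(A ∆ B) + #(B ∆ C) := card_union_add_card_inter _ _

end Finset

section jaccardDist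

variable {α : Type*} [DecidableEq α]

-- Unconditional because `x / 0 = 0` matches the convention for `A = B = ∅`.
theorem jaccardDist_eq_card_symmDiff_div (A B : Finset α) :
    jaccardDist A B = #(A ∆ B) / #(A ∪ B) := by
  unfold jaccardDist
  split_ifs with h
  · simp [h]
  · have hu : (#(A ∪ B) : ℝ) ≠ 0 := by simpa using h
    have hcard : (#(A ∆ B) : ℝ) + #(A ∩ B) = #(A ∪ B) := by
      exact_mod_cast card_symmDiff_add_card_inter A B
    field_simp
    linarith

theorem jaccardDist_nonneg (A B : Finset α) : 0 ≤ jaccardDist A B := by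
  rw [jaccardDist_eq_card_symmDiff_div]
  positivity

theorem jaccardDist_eq_zero_iff {A B : Finset α} : jaccardDist A B = 0 ↔ A = B := by
  rw [jaccardDist_eq_card_symmDiff_div, div_eq_zero_iff, Nat.cast_eq_zero, Nat.cast_eq_zero,
    card_eq_zero, card_eq_zero, ← bot_eq_empty, symmDiff_eq_bot, bot_eq_empty,
    or_iff_left_of_imp]
  rintro h
  rw [union_eq_empty] at h
  rw [h.1, h.2]

theorem jaccardDist_comm (A B : Finset α) : jaccardDist A B = jaccardDist B A := by
  simp only [jaccardDist_eq_card_symmDiff_div, symmDiff_comm, union_comm]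

theorem jaccardDist_triangle (A B C : Finset α) :
    jaccardDist A C ≤ jaccardDist A B + jaccardDist B C := by
  simp only [jaccardDist_eq_card_symmDiff_div]
  set U := B ∪ (A ∪ C)
  have hU : (#(A ∪ C) : ℝ) + #(B \ (A ∪ C)) = #U := by
    exact_mod_cast (add_comm _ _).trans (card_sdiff_add_card B (A ∪ C))
  calc (#(A ∆ C) : ℝ) / #(A ∪ C)
      ≤ (#(A ∆ C) + #(B \ (A ∪ C))) / (#(A ∪ C) + #(B \ (A ∪ C))) :=
        div_le_add_div_add (by positivity) (by exact_mod_cast card_le_card symmDiff_le_sup)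
          (by positivity)
    _ ≤ (#(A ∆ B) + #(B ∆ C)) / #U := by
        rw [hU]
        exact div_le_div_of_nonneg_right
          (by exact_mod_cast card_symmDiff_add_card_sdiff_union_le A B C) (by positivity)
    _ = #(A ∆ B) / #U + #(B ∆ C) / #U := add_div _ _ _
    _ ≤ #(A ∆ B) / #(A ∪ B) + #(B ∆ C) / #(B ∪ C) := by
        apply add_le_add <;> apply card_div_card_le_card_div_card symmDiff_le_sup <;>
          intro x <;> simp only [U, mem_union] <;> tauto

end jaccardDist

theorem jaccardDist_is_metric {α : Type*} [DecidableEq α] :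
    (∀ A B : Finset α, 0 ≤ jaccardDist A B) ∧
    (∀ A B : Finset α, jaccardDist A B = 0 ↔ A = B) ∧
    (∀ A B : Finset α, jaccardDist A B = jaccardDist B A) ∧
    (∀ A B C : Finset α, jaccardDist A C ≤ jaccardDist A B + jaccardDist B C) :=
  ⟨jaccardDist_nonneg, fun _ _ => jaccardDist_eq_zero_iff, jaccardDist_comm,
    jaccardDist_triangle⟩
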